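/- Let c(p) = R_mᵀ(p − p_m) be a landmark's coordinates in camera frame m, where (R_m, p_m) ∈ SO(3)×ℝ³ is the camera pose. With the invariant error parametrization R_m = Γ₀(δθ)R̂_m, p_m = Γ₀(δθ)p̂_m + Γ₁(δθ)δp_m, p_f = Γ₀(δθ₀)p̂_f + Γ₁(δθ₀)δp_f (anchored to pose 0 with error δθ₀), the first-order expansion of the error of c satisfies: ∂(δc)/∂(δθ_m) = R̂_mᵀ (p̂_f)^×, ∂(δc)/∂(δθ₀) = −R̂_mᵀ(p̂_f)^×, ∂(δc)/∂(δp_m) = −R̂_mᵀ, ∂(δc)/∂(δp_f) = R̂_mᵀ. -/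

import Mathlib

open Matrix

def skew (v : Fin 3 → ℝ) : Matrix (Fin 3) (Fin 3) ℝ :=
  !![0, -v 2, v 1; v 2, 0, -v 0; -v 1, v 0, 0]

noncomputable def Gamma (m : ℕ) (θ : Fin 3 → ℝ) : Matrix (Fin 3) (Fin 3) ℝ :=
  ∑' n : ℕ, (((m + n).factorial : ℝ))⁻¹ • (skew θ) ^ n

/-- Error of the landmark coordinates in camera frame m under the invariant error
parametrization, as a function of the four error variables (δθ_m, δp_m, δθ₀, δp_f). -/
noncomputable def errC (Rhm : Matrix (Fin 3) (Fin 3) ℝ) (phm phf : Fin 3 → ℝ)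
    (δθm δpm δθ0 δpf : Fin 3 → ℝ) : Fin 3 → ℝ :=
  (Gamma 0 δθm * Rhm)ᵀ *ᵥ
      ((Gamma 0 δθ0 *ᵥ phf + Gamma 1 δθ0 *ᵥ δpf) -
        (Gamma 0 δθm *ᵥ phm + Gamma 1 δθm *ᵥ δpm)) -
    Rhmᵀ *ᵥ (phf - phm)

/-!
Since `Γ₀(θ) = exp(θ^×)` and `Γ₀(0) = Γ₁(0) = 1`, the error along each single error direction
has a closed form. For the rotations, `exp(s u^×)ᵀ = exp(-s u^×)` is the inverse rotation, so
the camera-rotation error is `R̂ᵀ(exp(-s u^×) p̂_f - p̂_f)` and the anchor-rotation error is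
`R̂ᵀ(exp(s u^×) p̂_f - p̂_f)`; the position errors are linear in `s`. Differentiating
`exp(s A)` at `0` gives `A`, and `u^× p̂_f = -(p̂_f^× u)` turns the result into the claimed
Jacobians.
-/

open NormedSpace
attribute [local instance] Matrix.linftyOpNormedRing Matrix.linftyOpNormedAlgebra

lemma skew_zero : skew 0 = 0 := by
  ext i j; fin_cases i <;> fin_cases j <;> simp [skew]

lemma skew_smul (s : ℝ) (u : Fin 3 → ℝ) : skew (s • u) = s • skew u := by
  ext i j; fin_cases i <;> fin_cases j <;> simp [skew]

lemma skew_transpose (u : Fin 3 → ℝ) : (skew u)ᵀ = -skew u := by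
  ext i j; fin_cases i <;> fin_cases j <;> simp [skew]

lemma skew_mulVec (u v : Fin 3 → ℝ) : skew u *ᵥ v = -(skew v *ᵥ u) := by
  ext i; fin_cases i <;> simp [skew, mulVec, dotProduct, Fin.sum_univ_succ] <;> ring

lemma Gamma_apply_zero (m : ℕ) : Gamma m 0 = ((m.factorial : ℝ))⁻¹ • 1 := by
  rw [Gamma, skew_zero, tsum_eq_single 0 fun n hn => by simp [zero_pow hn]]
  simp

lemma Gamma_zero_eq_exp (θ : Fin 3 → ℝ) : Gamma 0 θ = exp (skew θ) := by
  simp [Gamma, exp_eq_tsum (𝕂 := ℝ)]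

lemma transpose_exp_smul_skew (s : ℝ) (u : Fin 3 → ℝ) :
    (exp (s • skew u))ᵀ = exp (-s • skew u) := by
  rw [← Matrix.exp_transpose, transpose_smul, skew_transpose, smul_neg, neg_smul]

section Deriv

variable {n : Type*} [Fintype n]

lemma Matrix.exp_neg_mul_exp [DecidableEq n] (A : Matrix n n ℝ) : exp (-A) * exp A = 1 := by
  rw [Matrix.exp_neg]
  exact nonsing_inv_mul _ ((isUnit_iff_isUnit_det _).mp (Matrix.isUnit_exp A))

lemma HasDerivAt.const_mulVec {f : ℝ → n → ℝ} {f' : n → ℝ} {t : ℝ} (B : Matrix n n ℝ)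
    (h : HasDerivAt f f' t) : HasDerivAt (fun s => B *ᵥ f s) (B *ᵥ f') t :=
  (mulVecLin B).toContinuousLinearMap.hasFDerivAt.comp_hasDerivAt t h

lemma HasDerivAt.mulVec_const [DecidableEq n] {F : ℝ → Matrix n n ℝ} {F' : Matrix n n ℝ} {t : ℝ}
    (v : n → ℝ) (h : HasDerivAt F F' t) : HasDerivAt (fun s => F s *ᵥ v) (F' *ᵥ v) t := by
  have := (LinearMap.applyₗ v ∘ₗ toLin'.toLinearMap).toContinuousLinearMap.hasFDerivAt
    |>.comp_hasDerivAt t h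
  exact this

lemma hasDerivAt_exp_smul_mulVec [DecidableEq n] (A : Matrix n n ℝ) (v : n → ℝ) (c : ℝ) :
    HasDerivAt (fun s => exp ((c * s) • A) *ᵥ v) (c • (A *ᵥ v)) 0 := by
  have h := (hasDerivAt_exp_smul_const (𝕂 := ℝ) (c • A) 0).mulVec_const v
  rw [zero_smul, exp_zero, one_mul, smul_mulVec] at h
  simp only [smul_smul, mul_comm _ c] at h
  exact h

end Deriv

section Error

variable (Rhm : Matrix (Fin 3) (Fin 3) ℝ) (phm phf u : Fin 3 → ℝ) (s : ℝ)

lemma errC_smul_rotation_cam :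
    errC Rhm phm phf (s • u) 0 0 0 = Rhmᵀ *ᵥ (exp (-s • skew u) *ᵥ phf - phf) := by
  have hinv : exp (-s • skew u) * exp (s • skew u) = 1 := by
    rw [neg_smul]; exact Matrix.exp_neg_mul_exp _
  simp only [errC, Gamma_apply_zero, Gamma_zero_eq_exp, skew_smul, Nat.factorial, Nat.cast_one,
    inv_one, one_smul, one_mulVec, mulVec_zero, add_zero, transpose_mul, transpose_exp_smul_skew]
  rw [← mulVec_mulVec, mulVec_sub (exp _), mulVec_mulVec _ (exp _), hinv, one_mulVec]
  simp only [mulVec_sub]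
  abel

lemma errC_smul_rotation_anchor :
    errC Rhm phm phf 0 0 (s • u) 0 = Rhmᵀ *ᵥ (exp (s • skew u) *ᵥ phf - phf) := by
  simp [errC, Gamma_zero_eq_exp, Gamma_apply_zero, skew_smul, mulVec_sub]

lemma errC_smul_position_cam : errC Rhm phm phf 0 (s • u) 0 0 = s • -(Rhmᵀ *ᵥ u) := by
  simp [errC, Gamma_apply_zero, mulVec_sub, mulVec_add, mulVec_smul]

lemma errC_smul_position_landmark : errC Rhm phm phf 0 0 0 (s • u) = s • (Rhmᵀ *ᵥ u) := by
  simp [errC, Gamma_apply_zero, mulVec_sub, mulVec_add, mulVec_smul]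

end Error

theorem stmt_16_general (Rhm : Matrix (Fin 3) (Fin 3) ℝ) (phm phf : Fin 3 → ℝ) :
    (∀ u : Fin 3 → ℝ, ∀ i : Fin 3,
      HasDerivAt (fun s : ℝ => errC Rhm phm phf (s • u) 0 0 0 i)
        (((Rhmᵀ * skew phf) *ᵥ u) i) 0) ∧
    (∀ u : Fin 3 → ℝ, ∀ i : Fin 3,
      HasDerivAt (fun s : ℝ => errC Rhm phm phf 0 0 (s • u) 0 i)
        ((-((Rhmᵀ * skew phf) *ᵥ u)) i) 0) ∧
    (∀ u : Fin 3 → ℝ, ∀ i : Fin 3,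
      HasDerivAt (fun s : ℝ => errC Rhm phm phf 0 (s • u) 0 0 i)
        ((-(Rhmᵀ *ᵥ u)) i) 0) ∧
    (∀ u : Fin 3 → ℝ, ∀ i : Fin 3,
      HasDerivAt (fun s : ℝ => errC Rhm phm phf 0 0 0 (s • u) i)
        ((Rhmᵀ *ᵥ u) i) 0) := by
  refine ⟨fun u => hasDerivAt_pi.1 ?_, fun u => hasDerivAt_pi.1 ?_, fun u => hasDerivAt_pi.1 ?_,
    fun u => hasDerivAt_pi.1 ?_⟩
  · have h := ((hasDerivAt_exp_smul_mulVec (skew u) phf (-1)).sub_const phf).const_mulVec Rhmᵀ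
    rw [← mulVec_mulVec, skew_mulVec phf]
    simpa only [errC_smul_rotation_cam, neg_one_mul, neg_one_smul] using h
  · have h := ((hasDerivAt_exp_smul_mulVec (skew u) phf 1).sub_const phf).const_mulVec Rhmᵀ
    rw [← mulVec_mulVec, skew_mulVec phf, mulVec_neg, neg_neg]
    simpa only [errC_smul_rotation_anchor, one_mul, one_smul] using h
  · simpa only [errC_smul_position_cam, one_smul] using
      (hasDerivAt_id' (0 : ℝ)).smul_const (-(Rhmᵀ *ᵥ u))
  · simpa only [errC_smul_position_landmark, one_smul] using
      (hasDerivAt_id' (0 : ℝ)).smul_const (Rhmᵀ *ᵥ u)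

/-- The first-order (directional) partial derivatives of the camera-frame landmark error
at zero error are given by the claimed invariant-filter visual Jacobians. -/
theorem stmt_16 (Rhm : Matrix (Fin 3) (Fin 3) ℝ) (hR : Rhmᵀ * Rhm = 1)
    (hdet : Rhm.det = 1) (phm phf : Fin 3 → ℝ) :
    (∀ u : Fin 3 → ℝ, ∀ i : Fin 3,
      HasDerivAt (fun s : ℝ => errC Rhm phm phf (s • u) 0 0 0 i)
        (((Rhmᵀ * skew phf) *ᵥ u) i) 0) ∧
    (∀ u : Fin 3 → ℝ, ∀ i : Fin 3,
      HasDerivAt (fun s : ℝ => errC Rhm phm phf 0 0 (s • u) 0 i)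
        ((-((Rhmᵀ * skew phf) *ᵥ u)) i) 0) ∧
    (∀ u : Fin 3 → ℝ, ∀ i : Fin 3,
      HasDerivAt (fun s : ℝ => errC Rhm phm phf 0 (s • u) 0 0 i)
        ((-(Rhmᵀ *ᵥ u)) i) 0) ∧
    (∀ u : Fin 3 → ℝ, ∀ i : Fin 3,
      HasDerivAt (fun s : ℝ => errC Rhm phm phf 0 0 0 (s • u) i)
        ((Rhmᵀ *ᵥ u) i) 0) :=
  stmt_16_general Rhm phm phf
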